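/- An infinite word s over a finite alphabet A is standard episturmian if and only if for every letter a ∈ A and every total order on A in which a is the minimal letter, a·s ≤ min(s) in the lexicographic order on infinite words. -/

import Mathlib

/-!
If `s` is standard episturmian, or if `a·s ≤ min(s)` for every order with least letter `a`, then
`z = s₀` is separating, so `s = Ψ_z(y)` where `y` is read off the cutting of `s` into blocks `z`
and `zx`; both properties pass from `s` to `y`.

A failure of `a·s ≤ min(s)` shows up at a shortest factor below `a·s`, which has the form
`a s₀ ⋯ s_{M-1} c` with `c < s_M`. For standard `s` such a factor desubstitutes to a shorter one
of `y`, so by induction there is none. Conversely such factors of `y` lift to `s`, so `y` inherits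
the order condition; every factor of `s` of length at least two lies in `Ψ_z(u) z` for a shorter
factor `u` of `y`, and `Ψ_z(ũ) z` is the reversal of `Ψ_z(u) z`, which gives closure under
reversal by induction. A left special factor `u` with left extensions `x ≠ x'` is a prefix: at the
first place `i` where `u` differs from the prefix, an order with `x` least and `uᵢ` second forces
the prefix letter there to be `x`, and likewise `x'`.
-/

/-- The prefix of length `k` of an infinite word `w : ℕ → A`. -/
def pref {A : Type*} (w : ℕ → A) (k : ℕ) : List A := (List.range k).map w

/-- `u` is a (finite) factor of the infinite word `w`. -/
def IsFactor {A : Type*} (w : ℕ → A) (u : List A) : Prop :=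
  ∃ i : ℕ, u = (List.range u.length).map (fun j => w (i + j))

/-- Prepend a letter to an infinite word. -/
def consW {A : Type*} (a : A) (s : ℕ → A) : ℕ → A := fun n => match n with
  | 0 => a
  | n + 1 => s n

/-- Concatenation of a finite word with an infinite word. -/
def catW {A : Type*} (u : List A) (w : ℕ → A) : ℕ → A := fun n =>
  if h : n < u.length then u.get ⟨n, h⟩ else w (n - u.length)

/-- `u` is the lexicographically smallest factor of `w` of length `k`,
w.r.t. the strict order `lt` on letters. -/
def IsMinFactor {A : Type*} (lt : A → A → Prop) (w : ℕ → A) (k : ℕ) (u : List A) : Prop :=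
  IsFactor w u ∧ u.length = k ∧
    ∀ v, IsFactor w v → v.length = k → u = v ∨ List.Lex lt u v

/-- `u` is the lexicographically greatest factor of `w` of length `k`. -/
def IsMaxFactor {A : Type*} (lt : A → A → Prop) (w : ℕ → A) (k : ℕ) (u : List A) : Prop :=
  IsFactor w u ∧ u.length = k ∧
    ∀ v, IsFactor w v → v.length = k → u = v ∨ List.Lex lt v u

/-- `m = min(w)`: every length-`k` prefix of `m` is the lexicographically
smallest factor of `w` of length `k`. -/
def IsMinWord {A : Type*} (lt : A → A → Prop) (w m : ℕ → A) : Prop :=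
  ∀ k : ℕ, IsMinFactor lt w k (pref m k)

/-- `m = max(w)`. -/
def IsMaxWord {A : Type*} (lt : A → A → Prop) (w m : ℕ → A) : Prop :=
  ∀ k : ℕ, IsMaxFactor lt w k (pref m k)

/-- The letter `z` is separating for `t`: every length-2 factor of `t` contains `z`. -/
def Separating {A : Type*} (z : A) (t : ℕ → A) : Prop :=
  ∀ u, IsFactor t u → u.length = 2 → z ∈ u

/-- The episturmian morphism `Ψ_z` on finite words: `z ↦ z`, `x ↦ zx` for `x ≠ z`. -/
def psiL {A : Type*} [DecidableEq A] (z : A) (u : List A) : List A :=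
  u.flatMap (fun x => if x = z then [z] else [z, x])

/-- `t = Ψ_z(y)` for infinite words: the `Ψ_z`-image of every prefix of `y`
is a prefix of `t`. -/
def PsiImage {A : Type*} [DecidableEq A] (z : A) (y t : ℕ → A) : Prop :=
  ∀ n : ℕ, psiL z (pref y n) = pref t (psiL z (pref y n)).length

/-- `u` is a left special factor of `w`. -/
def LeftSpecial {A : Type*} (w : ℕ → A) (u : List A) : Prop :=
  ∃ a b : A, a ≠ b ∧ IsFactor w (a :: u) ∧ IsFactor w (b :: u)

/-- `u` is a right special factor of `w`. -/
def RightSpecial {A : Type*} (w : ℕ → A) (u : List A) : Prop :=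
  ∃ a b : A, a ≠ b ∧ IsFactor w (u ++ [a]) ∧ IsFactor w (u ++ [b])

/-- `w` is a standard episturmian word: factors closed under reversal and
every left special factor is a prefix. -/
def StdEpisturmian {A : Type*} (w : ℕ → A) : Prop :=
  (∀ u, IsFactor w u → IsFactor w u.reverse) ∧
  (∀ u, LeftSpecial w u → u = pref w u.length)

/-- `w` is an `A`-strict standard episturmian word (standard Arnoux-Rauzy sequence):
standard episturmian and every prefix has every letter as a left extension. -/
def StrictStdEpisturmian {A : Type*} (w : ℕ → A) : Prop :=
  StdEpisturmian w ∧ ∀ (n : ℕ) (a : A), IsFactor w (a :: pref w n)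

/-- `w` is episturmian: factors closed under reversal and at most one right
special factor of each length. -/
def Episturmian {A : Type*} (w : ℕ → A) : Prop :=
  (∀ u, IsFactor w u → IsFactor w u.reverse) ∧
  (∀ u v, RightSpecial w u → RightSpecial w v → u.length = v.length → u = v)

/-- `w` is an `A`-strict episturmian word: it has the same set of factors as some
`A`-strict standard episturmian word. -/
def StrictEpisturmian {A : Type*} (w : ℕ → A) : Prop :=
  ∃ s : ℕ → A, StrictStdEpisturmian s ∧ ∀ u, IsFactor w u ↔ IsFactor s u

/-- `t` is fine: there is an infinite word `s` such that for every total order on the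
alphabet and every letter `a` minimal for that order, `min(t) = a·s`. -/
def Fine {A : Type*} (t : ℕ → A) : Prop :=
  ∃ s : ℕ → A, ∀ (l : LinearOrder A) (a : A), (∀ b, l.le a b) →
    IsMinWord l.lt t (consW a s)

section
variable {A : Type*}

section Words

def seg (w : ℕ → A) (i n : ℕ) : List A := (List.range n).map fun j => w (i + j)

@[simp] lemma length_seg (w : ℕ → A) (i n : ℕ) : (seg w i n).length = n := by simp [seg]

@[simp] lemma getElem_seg (w : ℕ → A) (i n t : ℕ) (ht : t < (seg w i n).length) :
    (seg w i n)[t] = w (i + t) := by simp [seg]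

@[simp] lemma length_pref (w : ℕ → A) (n : ℕ) : (pref w n).length = n := by simp [pref]

@[simp] lemma getElem_pref (w : ℕ → A) (n t : ℕ) (ht : t < (pref w n).length) :
    (pref w n)[t] = w t := by simp [pref]

lemma pref_eq_seg (w : ℕ → A) (n : ℕ) : pref w n = seg w 0 n := by simp [pref, seg]

lemma seg_add (w : ℕ → A) (i m n : ℕ) : seg w i (m + n) = seg w i m ++ seg w (i + m) n := by
  refine List.ext_getElem (by simp) fun t h _ => ?_
  rcases lt_or_ge t m with htm | htm
  · simp [List.getElem_append_left (show t < (seg w i m).length by simpa using htm)]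
  · rw [List.getElem_append_right (by simpa using htm)]
    simp only [getElem_seg, length_seg]
    congr 1
    omega

lemma seg_succ (w : ℕ → A) (i n : ℕ) : seg w i (n + 1) = seg w i n ++ [w (i + n)] := by
  simp [seg, List.range_succ]

lemma seg_succ_eq_cons (w : ℕ → A) (i n : ℕ) : seg w i (n + 1) = w i :: seg w (i + 1) n := by
  rw [Nat.add_comm, seg_add]
  simp [seg]

lemma seg_two (w : ℕ → A) (i : ℕ) : seg w i 2 = [w i, w (i + 1)] := by
  simp [seg, List.range_succ]

lemma seg_append_seg (w : ℕ → A) {i j k : ℕ} (hij : i ≤ j) (hjk : j ≤ k) :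
    seg w i (j - i) ++ seg w j (k - j) = seg w i (k - i) := by
  obtain ⟨d, rfl⟩ := Nat.exists_eq_add_of_le hij
  obtain ⟨e, rfl⟩ := Nat.exists_eq_add_of_le hjk
  rw [Nat.add_sub_cancel_left, Nat.add_sub_cancel_left, Nat.add_assoc, Nat.add_sub_cancel_left,
    seg_add]

lemma pref_succ (w : ℕ → A) (n : ℕ) : pref w (n + 1) = pref w n ++ [w n] := by
  simp [pref_eq_seg, seg_succ]

lemma pref_consW (a : A) (s : ℕ → A) (n : ℕ) : pref (consW a s) (n + 1) = a :: pref s n := by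
  refine List.ext_getElem (by simp) fun t _ _ => ?_
  cases t <;> simp [consW]

lemma seg_infix_seg (w : ℕ → A) {i n i' n' : ℕ} (h₁ : i' ≤ i) (h₂ : i + n ≤ i' + n') :
    seg w i n <:+: seg w i' n' := by
  obtain ⟨d, rfl⟩ := Nat.exists_eq_add_of_le h₁
  obtain ⟨e, he⟩ := Nat.exists_eq_add_of_le h₂
  refine ⟨seg w i' d, seg w (i' + d + n) e, ?_⟩
  rw [← seg_add, Nat.add_assoc i', ← seg_add]
  congr 1
  omega

lemma isFactor_seg (w : ℕ → A) (i n : ℕ) : IsFactor w (seg w i n) := ⟨i, by simp [seg]⟩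

lemma isFactor_iff {w : ℕ → A} {u : List A} : IsFactor w u ↔ ∃ i, seg w i u.length = u :=
  exists_congr fun _ => eq_comm

lemma IsFactor.of_infix {w : ℕ → A} {u v : List A} (hv : IsFactor w v) (h : u <:+: v) :
    IsFactor w u := by
  obtain ⟨i, hi⟩ := isFactor_iff.1 hv
  obtain ⟨p, q, rfl⟩ := h
  simp only [List.length_append, seg_add] at hi
  obtain ⟨hpu, -⟩ := List.append_inj hi (by simp)
  exact isFactor_iff.2 ⟨_, (List.append_inj hpu (by simp)).2⟩

lemma isFactor_pair (w : ℕ → A) (i : ℕ) : IsFactor w [w i, w (i + 1)] :=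
  seg_two w i ▸ isFactor_seg w i 2

lemma Separating.eq_or_eq {z : A} {s : ℕ → A} (h : Separating z s) (p : ℕ) :
    s p = z ∨ s (p + 1) = z := by
  simpa [eq_comm] using h _ (isFactor_pair s p) rfl

lemma IsFactor.exists_cons_append {s : ℕ → A} {a c : A} {u : List A}
    (h : IsFactor s (a :: u ++ [c])) :
    ∃ p, s p = a ∧ seg s (p + 1) u.length = u ∧ s (p + 1 + u.length) = c := by
  obtain ⟨p, hp⟩ := isFactor_iff.1 h
  rw [show (a :: u ++ [c]).length = u.length + 1 + 1 by simp, seg_succ, seg_succ_eq_cons,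
    Nat.add_comm u.length 1, ← Nat.add_assoc] at hp
  obtain ⟨hp, hc⟩ := List.append_inj hp (by simp)
  rw [List.cons.injEq] at hp
  exact ⟨p, hp.1, hp.2, by simpa using hc⟩

end Words

lemma exists_linearOrder_least_secondLeast (a c : A) :
    ∃ l : LinearOrder A, (∀ b, l.le a b) ∧ ∀ b, b ≠ a → l.le c b := by
  classical
  let : LinearOrder A := IsWellOrder.linearOrder WellOrderingRel
  let f : A → WithBot (WithBot A) := fun x => if x = a then ⊥ else if x = c then ↑(⊥ : WithBot A)
    else ↑↑x
  have hf : f.Injective := by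
    intro x y h
    simp only [f] at h
    split_ifs at h <;> simp_all
  refine ⟨LinearOrder.lift' f hf, fun b => show f a ≤ f b by simp [f], fun b hb => ?_⟩
  show f c ≤ f b
  by_cases hca : c = a
  · simp [f, hca]
  · by_cases hbc : b = c <;> simp [f, hca, hb, hbc]

lemma List.lt_iff_getElem_lt_of_firstDiff {α : Type*} [Preorder α] {l₁ l₂ : List α} {i : ℕ}
    (h₁ : i < l₁.length) (h₂ : i < l₂.length) (heq : ∀ j (hj : j < i), l₁[j] = l₂[j])
    (hne : l₁[i] ≠ l₂[i]) : l₁ < l₂ ↔ l₁[i] < l₂[i] := by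
  rw [List.lt_iff_exists]
  refine ⟨?_, fun h => Or.inr ⟨i, h₁, h₂, heq, h⟩⟩
  rintro (⟨h, -⟩ | ⟨k, hk₁, hk₂, hk, hlt⟩)
  · exact absurd (by rw [List.getElem_of_eq h, List.getElem_take]) hne
  · obtain rfl : k = i := by
      rcases lt_trichotomy k i with h | h | h
      · exact absurd (heq k h) hlt.ne
      · exact h
      · exact absurd (hk i h) hne
    exact hlt

/-- `w ≤ min(s)`. -/
def LeMin (lt : A → A → Prop) (w s : ℕ → A) : Prop :=
  ∀ v, IsFactor s v → pref w v.length = v ∨ List.Lex lt (pref w v.length) v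

/-- `a·s ≤ min(s)` for every order and its least letter `a`. -/
def ConsLeMin (s : ℕ → A) : Prop :=
  ∀ (l : LinearOrder A) (a : A), (∀ b, l.le a b) → LeMin l.lt (consW a s) s

/-- A witness of `min(s) < a·s`: a shortest factor of `s` below `a·s` has this shape. -/
def Undercut [LT A] (s : ℕ → A) (a : A) (M : ℕ) (c : A) : Prop :=
  IsFactor s (a :: pref s M ++ [c]) ∧ c < s M

section LinearOrder
variable [LinearOrder A]

lemma leMin_iff_le {w s : ℕ → A} : LeMin (· < ·) w s ↔ ∀ v, IsFactor s v → pref w v.length ≤ v :=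
  forall₂_congr fun _ _ => le_iff_eq_or_lt.symm

lemma leMin_consW_iff_forall_not_undercut {s : ℕ → A} {a : A} (ha : ∀ b, a ≤ b) :
    LeMin (· < ·) (consW a s) s ↔ ∀ M c, ¬ Undercut s a M c := by
  rw [leMin_iff_le]
  constructor
  · rintro h M c ⟨hv, hc⟩
    have hP : pref (consW a s) (a :: pref s M ++ [c]).length = a :: pref s M ++ [s M] := by
      rw [show (a :: pref s M ++ [c]).length = M + 1 + 1 by simp, pref_succ, pref_consW]
      rfl
    exact (h _ hv).not_gt (hP ▸ List.append_left_lt (List.Lex.rel hc))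
  · intro h v hv
    by_contra! hlt
    rcases List.lt_iff_exists.1 hlt with ⟨-, hlen⟩ | ⟨i, hi₁, hi₂, heq, hi⟩
    · simp at hlen
    · obtain ⟨M, rfl⟩ : ∃ M, i = M + 1 := Nat.exists_eq_succ_of_ne_zero <| by
        rintro rfl
        exact (ha _).not_gt (by simpa [consW] using hi)
      refine h M v[M + 1] ⟨hv.of_infix ?_, by simpa [consW] using hi⟩
      have hv' : a :: pref s M ++ [v[M + 1]] = v.take (M + 2) := by
        rw [← pref_consW]
        refine List.ext_getElem (by simp; omega) fun t h₁ _ => ?_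
        rcases lt_or_eq_of_le (show t ≤ M + 1 by simp at h₁; omega) with ht | rfl
        · rw [List.getElem_append_left (by simpa using ht), List.getElem_take, heq t ht]
          simp
        · simp
      exact hv' ▸ (List.take_prefix _ _).isInfix

end LinearOrder

section Psi
variable [DecidableEq A] (z : A)

@[simp] lemma psiL_nil : psiL z ([] : List A) = [] := rfl

lemma psiL_cons (c : A) (u : List A) :
    psiL z (c :: u) = z :: if c = z then psiL z u else c :: psiL z u := by
  by_cases hc : c = z <;> simp [psiL, hc]

lemma psiL_append (u v : List A) : psiL z (u ++ v) = psiL z u ++ psiL z v := by simp [psiL]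

lemma exists_psiL_singleton_eq_append (c : A) : ∃ p, psiL z [c] = p ++ [c] := by
  by_cases hc : c = z
  · exact ⟨[], by simp [psiL_cons, hc]⟩
  · exact ⟨[z], by simp [psiL_cons, hc]⟩

lemma prefix_psiL_singleton_append (c : A) : [z, c] <+: psiL z [c] ++ [z] := by
  by_cases hc : c = z <;> simp [psiL_cons, hc]

lemma psiL_injective : Function.Injective (psiL z) := by
  intro u v huv
  induction u generalizing v with
  | nil => cases v <;> simp_all [psiL_cons]
  | cons c u ih =>
    cases v with
    | nil => simp [psiL_cons] at huv
    | cons d v =>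
      -- `psiL z w` is empty or starts with `z`, so the letter after the leading `z` tells
      -- whether the first block is `z` or `zc`
      have hz_head : ∀ {e : A} (w t : List A), e ≠ z → psiL z w ≠ e :: t := by
        rintro e (_ | ⟨x, w⟩) t he <;> simp [psiL_cons, Ne.symm he]
      rw [psiL_cons, psiL_cons, List.cons.injEq] at huv
      by_cases hc : c = z <;> by_cases hd : d = z <;> simp only [hc, hd, if_true, if_false] at huv
      · rw [hc, hd, ih huv.2]
      · exact absurd huv.2 (hz_head _ _ hd)
      · exact absurd huv.2.symm (hz_head _ _ hc)
      · simp only [List.cons.injEq] at huv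
        rw [huv.2.1, ih huv.2.2]

lemma reverse_psiL_append (u : List A) : (psiL z u ++ [z]).reverse = psiL z u.reverse ++ [z] := by
  induction u with
  | nil => simp
  | cons c u ih =>
    rw [List.reverse_cons, psiL_append, psiL_cons z c u]
    simp only [List.reverse_append, List.reverse_singleton, List.singleton_append] at ih
    by_cases hc : c = z <;> simp [psiL_cons, hc] <;> rw [← List.cons_append, ih] <;> simp

end Psi

section Desubst
variable [DecidableEq A] (s : ℕ → A) (z : A)

/-- Position of the `m`-th block when `s` is cut into blocks `z` and `zx` (`x ≠ z`). -/
def blockStart : ℕ → ℕ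
  | 0 => 0
  | m + 1 => blockStart m + if s (blockStart m + 1) = z then 1 else 2

/-- The word `y` with `s = Ψ_z(y)`: the letter following a block start is `z` for the block `z`
and `x` for the block `zx`, which is the letter the block codes in both cases. -/
def desubst (m : ℕ) : A := s (blockStart s z m + 1)

@[simp] lemma blockStart_zero : blockStart s z 0 = 0 := rfl

lemma blockStart_succ_le (m : ℕ) : blockStart s z (m + 1) ≤ blockStart s z m + 2 := by
  simp only [blockStart]; split <;> omega

lemma blockStart_strictMono : StrictMono (blockStart s z) :=
  strictMono_nat_of_lt_succ fun m => by simp only [blockStart]; split <;> omega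

lemma blockStart_add_le_of_le {j k : ℕ} (h : j ≤ k) :
    blockStart s z j + (k - j) ≤ blockStart s z k := by
  simpa [Nat.add_comm, Nat.sub_add_cancel h] using (blockStart_strictMono s z).add_le_nat (k - j) j

lemma exists_blockStart_le_lt (p : ℕ) :
    ∃ m, blockStart s z m ≤ p ∧ p < blockStart s z (m + 1) := by
  classical
  have hex : ∃ m, p < blockStart s z (m + 1) := ⟨p, (blockStart_strictMono s z).le_apply⟩
  refine ⟨Nat.find hex, ?_, Nat.find_spec hex⟩
  rcases h : Nat.find hex with _ | m
  · simp
  · exact not_lt.1 (Nat.find_min hex (by omega : m < Nat.find hex))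

variable {s z}

lemma blockStart_succ_of_eq {m : ℕ} (h : desubst s z m = z) :
    blockStart s z (m + 1) = blockStart s z m + 1 := by
  simp [blockStart, show s (blockStart s z m + 1) = z from h]

lemma blockStart_succ_of_ne {m : ℕ} (h : desubst s z m ≠ z) :
    blockStart s z (m + 1) = blockStart s z m + 2 := by
  simp [blockStart, show s (blockStart s z m + 1) ≠ z from h]

lemma exists_blockStart_eq {p : ℕ} (hp : s p = z) : ∃ m, blockStart s z m = p := by
  obtain ⟨m, hm₁, hm₂⟩ := exists_blockStart_le_lt s z p
  refine ⟨m, ?_⟩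
  by_contra hne
  have hnext : desubst s z m = z := by rwa [desubst, show blockStart s z m + 1 = p by
    have := blockStart_succ_le s z m; omega]
  have := blockStart_succ_of_eq hnext
  omega

lemma apply_blockStart (hz : s 0 = z) (hsep : Separating z s) (m : ℕ) :
    s (blockStart s z m) = z := by
  induction m with
  | zero => exact hz
  | succ m ih =>
    by_cases h : desubst s z m = z
    · rwa [blockStart_succ_of_eq h]
    · rw [blockStart_succ_of_ne h]
      exact (hsep.eq_or_eq (blockStart s z m + 1)).resolve_left h

lemma psiL_singleton_desubst (hz : s 0 = z) (hsep : Separating z s) (m : ℕ) :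
    psiL z [desubst s z m] =
      seg s (blockStart s z m) (blockStart s z (m + 1) - blockStart s z m) := by
  by_cases h : desubst s z m = z
  · rw [blockStart_succ_of_eq h]
    simp [psiL_cons, h, seg, apply_blockStart hz hsep]
  · rw [blockStart_succ_of_ne h]
    simp [psiL_cons, h, seg, List.range_succ, apply_blockStart hz hsep]
    rfl

lemma psiL_seg_desubst (hz : s 0 = z) (hsep : Separating z s) (j n : ℕ) :
    psiL z (seg (desubst s z) j n) =
      seg s (blockStart s z j) (blockStart s z (j + n) - blockStart s z j) := by
  induction n with
  | zero => simp [seg]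
  | succ n ih =>
    have h₁ := (blockStart_strictMono s z).monotone (show j ≤ j + n by omega)
    have h₂ := (blockStart_strictMono s z).monotone (show j + n ≤ j + n + 1 by omega)
    rw [seg_succ, psiL_append, ih, psiL_singleton_desubst hz hsep, ← Nat.add_assoc,
      seg_append_seg s h₁ h₂]

lemma psiL_pref_desubst (hz : s 0 = z) (hsep : Separating z s) (m : ℕ) :
    psiL z (pref (desubst s z) m) = pref s (blockStart s z m) := by
  simpa [pref_eq_seg] using psiL_seg_desubst hz hsep 0 m

lemma seg_desubst_of_psiL (hz : s 0 = z) (hsep : Separating z s) {u : List A} {j : ℕ}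
    (hu : seg s (blockStart s z j) (psiL z u).length = psiL z u)
    (hnext : s (blockStart s z j + (psiL z u).length) = z) :
    seg (desubst s z) j u.length = u ∧
      blockStart s z (j + u.length) = blockStart s z j + (psiL z u).length := by
  obtain ⟨m, hm⟩ := exists_blockStart_eq hnext
  have hjm : j ≤ m := (blockStart_strictMono s z).le_iff_le.1 (by omega)
  have hseg : seg (desubst s z) j (m - j) = u := by
    apply psiL_injective z
    rw [psiL_seg_desubst hz hsep, Nat.add_sub_cancel' hjm, hm, Nat.add_sub_cancel_left, hu]
  have hlen : m - j = u.length := by simpa using congrArg List.length hseg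
  rw [← hlen, Nat.add_sub_cancel' hjm, hm]
  exact ⟨hseg, rfl⟩

lemma psiL_seg_desubst_append (hz : s 0 = z) (hsep : Separating z s) (j n : ℕ) :
    psiL z (seg (desubst s z) j n) ++ [z] =
      seg s (blockStart s z j) (blockStart s z (j + n) - blockStart s z j + 1) := by
  have hle := (blockStart_strictMono s z).monotone (show j ≤ j + n by omega)
  rw [psiL_seg_desubst hz hsep, seg_succ, Nat.add_sub_cancel' hle, apply_blockStart hz hsep]

lemma isFactor_psiL_append_of_desubst (hz : s 0 = z) (hsep : Separating z s) {u : List A}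
    (hu : IsFactor (desubst s z) u) : IsFactor s (psiL z u ++ [z]) := by
  obtain ⟨j, hj⟩ := isFactor_iff.1 hu
  rw [← hj, psiL_seg_desubst_append hz hsep]
  exact isFactor_seg _ _ _

lemma isFactor_desubst_of_psiL_append (hz : s 0 = z) (hsep : Separating z s) {u : List A}
    (hu : IsFactor s (psiL z u ++ [z])) : IsFactor (desubst s z) u := by
  obtain ⟨i, hi⟩ := isFactor_iff.1 hu
  rw [List.length_append, List.length_singleton, seg_succ] at hi
  obtain ⟨hψ, hlast⟩ := List.append_inj hi (by simp)
  rcases u with _ | ⟨c, u⟩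
  · exact ⟨0, rfl⟩
  · have hi_z : s i = z := by
      simpa [psiL_cons, seg_succ_eq_cons] using congrArg List.head? hψ
    obtain ⟨j, rfl⟩ := exists_blockStart_eq hi_z
    exact isFactor_iff.2 ⟨j, (seg_desubst_of_psiL hz hsep hψ (by simpa using hlast)).1⟩

lemma exists_isFactor_desubst_infix (hz : s 0 = z) (hsep : Separating z s) {v : List A}
    (hv : IsFactor s v) (hv₂ : 2 ≤ v.length) :
    ∃ u, IsFactor (desubst s z) u ∧ u.length < v.length ∧ v <:+: psiL z u ++ [z] := by
  obtain ⟨i, hi⟩ := isFactor_iff.1 hv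
  obtain ⟨j, hj₁, hj₂⟩ := exists_blockStart_le_lt s z i
  obtain ⟨k, hk₁, hk₂⟩ := exists_blockStart_le_lt s z (i + v.length - 2)
  have hjk : j ≤ k + 1 := (blockStart_strictMono s z).le_iff_le.1 (by omega)
  refine ⟨seg (desubst s z) j (k + 1 - j), isFactor_seg _ _ _, ?_, ?_⟩
  · rw [length_seg]
    rcases Nat.lt_or_ge k (j + 1) with hkj | hkj
    · omega
    · have := blockStart_add_le_of_le s z hkj
      omega
  · rw [psiL_seg_desubst_append hz hsep, Nat.add_sub_cancel' hjk, ← hi]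
    exact seg_infix_seg s hj₁ (by omega)

lemma exists_blockStart_succ_eq (hz : s 0 = z) (hsep : Separating z s) {p : ℕ}
    (hp : s (p + 1) = z) : ∃ m, blockStart s z (m + 1) = p + 1 ∧ desubst s z m = s p := by
  obtain ⟨m, hm₁, hm₂⟩ := exists_blockStart_le_lt s z p
  have hle := blockStart_succ_le s z m
  by_cases hmp : blockStart s z m = p
  · have hm : desubst s z m = z := by rw [desubst, hmp, hp]
    exact ⟨m, by rw [blockStart_succ_of_eq hm, hmp], by rw [hm, ← hmp, apply_blockStart hz hsep]⟩
  · exact ⟨m, by omega, by rw [desubst, show blockStart s z m + 1 = p by omega]⟩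

lemma Undercut.of_desubst [LT A] (hz : s 0 = z) (hsep : Separating z s) {a c : A} {m : ℕ}
    (h : Undercut (desubst s z) a m c) : Undercut s a (blockStart s z m + 1) c := by
  obtain ⟨hfac, hlt⟩ := h
  refine ⟨(isFactor_psiL_append_of_desubst hz hsep hfac).of_infix ?_, hlt⟩
  obtain ⟨p, hp⟩ := exists_psiL_singleton_eq_append z a
  obtain ⟨q, hq⟩ := prefix_psiL_singleton_append z c
  refine ⟨p, q, ?_⟩
  change _ = psiL z ([a] ++ pref (desubst s z) m ++ [c]) ++ [z]
  rw [psiL_append, psiL_append, psiL_pref_desubst hz hsep,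
    List.append_assoc _ (psiL z [c]), ← hq, hp, pref_succ, apply_blockStart hz hsep]
  simp

lemma Undercut.exists_desubst_lt [LinearOrder A] (hz : s 0 = z) (hsep : Separating z s) {a c : A}
    (ha : ∀ b, a ≤ b) {M : ℕ} (h : Undercut s a M c) :
    ∃ m c', Undercut (desubst s z) a m c' ∧ m < M := by
  obtain ⟨hfac, hlt⟩ := h
  obtain ⟨p, hpa, hmid, hc⟩ := hfac.exists_cons_append
  rw [length_pref] at hmid hc
  rcases M with _ | N
  · rcases hsep.eq_or_eq p with h | h
    · exact absurd (hpa ▸ h ▸ hz ▸ hlt) (ha c).not_gt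
    · exact absurd (h ▸ hc ▸ hz ▸ hlt) (lt_irrefl _)
  have hp₁ : s (p + 1) = z := by
    simpa [hz] using List.getElem_of_eq hmid (by simp : 0 < (seg s (p + 1) (N + 1)).length)
  rw [seg_succ, pref_succ] at hmid
  obtain ⟨hmid, hsN⟩ := List.append_inj hmid (by simp)
  rw [List.singleton_inj] at hsN
  -- if `s N ≠ z`, separation forces both `c` and `s (N+1)` to be `z`, contradicting `c < s (N+1)`
  have hN : s N = z := by
    rcases hsep.eq_or_eq (p + 1 + N) with h | h
    · rwa [← hsN]
    · refine (hsep.eq_or_eq N).resolve_right fun h' => lt_irrefl z ?_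
      exact (h.symm.trans hc).trans_lt (hlt.trans_eq h')
  -- `s (p+1) ⋯ s (p+N)` copies `s₀ ⋯ s_{N-1}` from a block start to a block start, so it
  -- desubstitutes to a copy of a prefix of `y`, preceded by `a` and followed by `c`
  obtain ⟨k, hk⟩ := exists_blockStart_eq hN
  obtain ⟨m₀, hm₀, hym₀⟩ := exists_blockStart_succ_eq hz hsep hp₁
  have hψ : psiL z (pref (desubst s z) k) = pref s N := by rw [psiL_pref_desubst hz hsep, hk]
  obtain ⟨hseg, hend⟩ := seg_desubst_of_psiL hz hsep (u := pref (desubst s z) k) (j := m₀ + 1)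
    (by rw [hψ, hm₀, length_pref, hmid]) (by rw [hψ, hm₀, length_pref, hsN, hN])
  rw [hψ, hm₀, length_pref, length_pref] at hend
  refine ⟨k, c, ⟨isFactor_iff.2 ⟨m₀, ?_⟩, by rwa [desubst, hk]⟩, ?_⟩
  · rw [show (a :: pref (desubst s z) k ++ [c]).length = k + 1 + 1 by simp, seg_succ,
      seg_succ_eq_cons, hym₀, hpa, ← length_pref (desubst s z) k, hseg, ← Nat.add_assoc,
      desubst, Nat.add_right_comm, length_pref, hend, ← hc]
    rfl
  · have : k ≤ blockStart s z k := (blockStart_strictMono s z).le_apply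
    omega

end Desubst

namespace StdEpisturmian
variable {s : ℕ → A}

lemma separating (hs : StdEpisturmian s) : Separating (s 0) s := by
  -- a letter `c ≠ s 0` is not left special, so it has a single left neighbour
  have hleft : ∀ {b b' c : A}, c ≠ s 0 → IsFactor s [b, c] → IsFactor s [b', c] → b = b' := by
    intro b b' c hc hb hb'
    by_contra hne
    exact hc (by simpa [pref_eq_seg, seg] using hs.2 [c] ⟨b, b', hne, hb, hb'⟩)
  intro u hu hlen
  obtain ⟨i, hi⟩ := isFactor_iff.1 hu
  rw [hlen, seg_two] at hi
  subst hi
  by_contra hmem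
  simp only [List.mem_cons, List.not_mem_nil, or_false, not_or] at hmem
  have hrev : IsFactor s [s (i + 1), s i] := by simpa using hs.1 _ (isFactor_pair s i)
  -- the left neighbour of the first occurrence of `s i` or `s (i+1)` would be the other one
  classical
  have hex : ∃ n, s n = s i ∨ s n = s (i + 1) := ⟨i, Or.inl rfl⟩
  obtain ⟨N, hN⟩ : ∃ N, Nat.find hex = N + 1 := Nat.exists_eq_succ_of_ne_zero fun h0 => by
    have := Nat.find_spec hex
    rw [h0] at this
    exact this.elim hmem.1 hmem.2
  have hprev := Nat.find_min hex (show N < Nat.find hex by omega)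
  have hpair := isFactor_pair s N
  rcases hN ▸ Nat.find_spec hex with h | h <;> rw [h] at hpair
  · exact hprev (Or.inr (hleft (Ne.symm hmem.1) hpair hrev))
  · exact hprev (Or.inl (hleft (Ne.symm hmem.2) hpair (isFactor_pair s i)))

lemma stdEpisturmian_desubst [DecidableEq A] (hs : StdEpisturmian s) :
    StdEpisturmian (desubst s (s 0)) := by
  have hsep := hs.separating
  refine ⟨fun u hu => ?_, fun u ⟨x, x', hne, hx, hx'⟩ => ?_⟩
  · have := hs.1 _ (isFactor_psiL_append_of_desubst rfl hsep hu)
    rw [reverse_psiL_append] at this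
    exact isFactor_desubst_of_psiL_append rfl hsep this
  · have hext : ∀ b, IsFactor (desubst s (s 0)) (b :: u) →
        IsFactor s (b :: (psiL (s 0) u ++ [s 0])) := by
      intro b hb
      obtain ⟨p, hp⟩ := exists_psiL_singleton_eq_append (s 0) b
      refine (isFactor_psiL_append_of_desubst rfl hsep hb).of_infix ⟨p, [], ?_⟩
      change _ = psiL (s 0) ([b] ++ u) ++ [s 0]
      rw [psiL_append, hp]
      simp
    have hpref := hs.2 _ ⟨x, x', hne, hext x hx, hext x' hx'⟩
    rw [List.length_append, List.length_singleton, pref_succ] at hpref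
    obtain ⟨hψ, hz⟩ := List.append_inj hpref (by simp)
    rw [pref_eq_seg] at hψ
    have := (seg_desubst_of_psiL rfl hsep (j := 0) hψ.symm
      (by simpa [eq_comm] using hz)).1
    rwa [pref_eq_seg, eq_comm]

lemma not_undercut [LinearOrder A] {a : A} (ha : ∀ b, a ≤ b) (hs : StdEpisturmian s) (M : ℕ)
    (c : A) : ¬ Undercut s a M c := by
  induction M using Nat.strong_induction_on generalizing s c with
  | _ M ih =>
    classical
    intro h
    obtain ⟨m, c', hm, hmM⟩ := h.exists_desubst_lt rfl hs.separating ha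
    exact ih m hmM hs.stdEpisturmian_desubst c' hm

lemma consLeMin (hs : StdEpisturmian s) : ConsLeMin s := fun l _ ha =>
  letI := l
  (leMin_consW_iff_forall_not_undercut ha).2 (hs.not_undercut ha)

end StdEpisturmian

namespace ConsLeMin
variable {s : ℕ → A}

lemma pref_le_of_isFactor_cons [LinearOrder A] (h : ConsLeMin s) {a : A} (ha : ∀ b, a ≤ b)
    {u : List A} (hu : IsFactor s (a :: u)) : pref s u.length ≤ u := by
  have := leMin_iff_le.1 (h _ a ha) _ hu
  rw [List.length_cons, pref_consW] at this
  rcases le_iff_eq_or_lt.1 this with h | h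
  · exact (List.cons_inj_right a |>.1 h).le
  · exact ((List.cons_lt_cons_iff.1 h).resolve_left (lt_irrefl a)).2.le

lemma separating (h : ConsLeMin s) : Separating (s 0) s := by
  intro u hu hlen
  obtain ⟨i, hi⟩ := isFactor_iff.1 hu
  rw [hlen, seg_two] at hi
  subst hi
  obtain ⟨l, hmin, hsnd⟩ := exists_linearOrder_least_secondLeast (s i) (s (i + 1))
  let := l
  by_contra hmem
  simp only [List.mem_cons, List.not_mem_nil, or_false, not_or] at hmem
  have hle : [s 0] ≤ [s (i + 1)] := h.pref_le_of_isFactor_cons hmin (isFactor_pair s i)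
  rcases le_iff_eq_or_lt.1 hle with h | h
  · exact hmem.2 (List.singleton_inj.1 h)
  · exact (hsnd _ hmem.1).not_gt ((List.cons_lt_cons_iff.1 h).resolve_right (by simp))

lemma eq_pref_of_leftSpecial (h : ConsLeMin s) {u : List A} (hu : LeftSpecial s u) :
    u = pref s u.length := by
  obtain ⟨x, x', hne, hx, hx'⟩ := hu
  by_contra hpu
  classical
  have hex : ∃ i, ∃ hi : i < u.length, (pref s u.length)[i]'(by simpa) ≠ u[i] := by
    by_contra! hall
    exact hpu (List.ext_getElem (by simp) fun i hi _ => (hall i hi).symm)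
  obtain ⟨hi, hdiff⟩ := Nat.find_spec hex
  have heq : ∀ j (hj : j < Nat.find hex), (pref s u.length)[j]'(by simp; omega) = u[j] := by
    intro j hj
    by_contra hne
    exact Nat.find_min hex hj ⟨by omega, hne⟩
  -- the prefix letter at the first difference is below `u[i]`, which is second least, so it is `b`
  have key : ∀ b, IsFactor s (b :: u) →
      (pref s u.length)[Nat.find hex]'(by simpa using hi) = b := by
    intro b hb
    obtain ⟨l, hmin, hsnd⟩ := exists_linearOrder_least_secondLeast b u[Nat.find hex]
    let := l
    have hlt := (List.lt_iff_getElem_lt_of_firstDiff _ _ heq hdiff).1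
      (lt_of_le_of_ne (h.pref_le_of_isFactor_cons hmin hb) (Ne.symm hpu))
    by_contra hb'
    exact (hsnd _ hb').not_gt hlt
  exact hne ((key x hx).symm.trans (key x' hx'))

lemma consLeMin_desubst [DecidableEq A] (h : ConsLeMin s) : ConsLeMin (desubst s (s 0)) := by
  intro l a ha
  let := l
  refine (leMin_consW_iff_forall_not_undercut ha).2 fun M c hM => ?_
  exact (leMin_consW_iff_forall_not_undercut ha).1 (h l a ha) _ _ (hM.of_desubst rfl h.separating)

lemma isFactor_reverse (h : ConsLeMin s) {v : List A} (hv : IsFactor s v) :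
    IsFactor s v.reverse := by
  induction hn : v.length using Nat.strong_induction_on generalizing s v with
  | _ n ih =>
    classical
    rcases Nat.lt_or_ge v.length 2 with hv₂ | hv₂
    · rcases v with _ | ⟨c, _ | ⟨d, v⟩⟩
      · exact hv
      · exact hv
      · simp at hv₂
    · obtain ⟨u, hu, hlen, hinf⟩ := exists_isFactor_desubst_infix rfl h.separating hv hv₂
      have hrev := isFactor_psiL_append_of_desubst rfl h.separating
        (ih u.length (hn ▸ hlen) h.consLeMin_desubst hu rfl)
      rw [← reverse_psiL_append] at hrev
      exact hrev.of_infix (List.reverse_infix.2 hinf)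

end ConsLeMin

end

theorem stmt_8_general {A : Type*} (s : ℕ → A) :
    StdEpisturmian s ↔
      ∀ (l : LinearOrder A) (a : A), (∀ b, l.le a b) →
        ∀ v : List A, IsFactor s v →
          pref (consW a s) v.length = v ∨ List.Lex l.lt (pref (consW a s) v.length) v :=
  ⟨StdEpisturmian.consLeMin, fun h =>
    ⟨fun _ => ConsLeMin.isFactor_reverse h, fun _ => ConsLeMin.eq_pref_of_leftSpecial h⟩⟩

/-- `s` is standard episturmian iff `a·s ≤ min(s)` for every letter `a` and every
order making `a` minimal (expressed factor-wise: every factor of `s` is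
lexicographically ≥ the prefix of `a·s` of the same length). -/
theorem stmt_8 {A : Type*} [Fintype A] (s : ℕ → A) :
    StdEpisturmian s ↔
      ∀ (l : LinearOrder A) (a : A), (∀ b, l.le a b) →
        ∀ v : List A, IsFactor s v →
          pref (consW a s) v.length = v ∨ List.Lex l.lt (pref (consW a s) v.length) v :=
  stmt_8_general s
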